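/- arXiv:1602.08763 — 2 statements merged into one kernel-verified Lean document; each statement's English description precedes it below -/
import Mathlib

section
/- Let d ≥ 1 and let φ : ℝ^d × ℝ^d → ℝ be continuous, compactly supported in its first variable, and ℤ^d-periodic in its second variable. Then lim_{ε→0⁺} sup_{s∈ℝ^d} | ∫_{ℝ^d} φ(x, x/ε + s) dx − ∫_{ℝ^d} ∫_{[0,1]^d} φ(x,y) dy dx | = 0; the convergence of the oscillating integrals is uniform with respect to arbitrary shifts s of the fast variable. -/
/-!
Write `I(s) = ∫ φ(x, x/ε + s) dx`. Averaging `I(s + t)` over `t` in the unit cube, Fubini and the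
translation invariance of the integral of a periodic function over a period cell give exactly
`∫∫_{[0,1]^d} φ(x, y) dy dx`. On the other hand the substitution `x ↦ x - ε t` turns `I(s + t)`
into `∫ φ(x - ε t, x/ε + s) dx`, so `|I(s + t) - I(s)|` is bounded by the modulus of continuity
of `φ` in its slow variable at scale `ε`, times the measure of the support. Periodicity and
compact support make that modulus uniform in the fast variable, hence `I(s)` is uniformly close
to its average.
-/

open MeasureTheory Set Submodule Function Pointwise

theorem norm_le_one_of_mem_Icc_zero_one {ι : Type*} [Fintype ι] {t : ι → ℝ}
    (ht : t ∈ Icc 0 1) : ‖t‖ ≤ 1 :=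
  (pi_norm_le_iff_of_nonneg zero_le_one).2 fun i => by
    rw [Real.norm_eq_abs, abs_of_nonneg (ht.1 i)]
    exact ht.2 i

theorem setIntegral_Icc_add_eq_of_intPeriodic {ι E : Type*} [Fintype ι] [NormedAddCommGroup E]
    [NormedSpace ℝ E] {f : (ι → ℝ) → E}
    (hf : ∀ y (k : ι → ℤ), f (y + fun i => (k i : ℝ)) = f y) (a : ι → ℝ) :
    ∫ t in Icc 0 1, f (a + t) = ∫ y in Icc 0 1, f y := by
  -- Mathlib provides this instance only for the lattice viewed as an `AddSubgroup`.
  have : VAddInvariantMeasure (span ℤ (range (Pi.basisFun ℝ ι))) (ι → ℝ) volume :=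
    inferInstanceAs <| VAddInvariantMeasure (span ℤ (range (Pi.basisFun ℝ ι))).toAddSubgroup _ _
  have hD := ZSpan.isAddFundamentalDomain (Pi.basisFun ℝ ι) volume
  have hD_ae : ZSpan.fundamentalDomain (Pi.basisFun ℝ ι) =ᵐ[volume] Icc (0 : ι → ℝ) 1 := by
    rw [ZSpan.fundamentalDomain_pi_basisFun, volume_pi]
    exact Measure.univ_pi_Ico_ae_eq_Icc
  have hinv : ∀ (γ : span ℤ (range (Pi.basisFun ℝ ι))) y, f (γ +ᵥ y) = f y := by
    rintro ⟨γ, hγ⟩ y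
    have : ∀ i, ∃ n : ℤ, (n : ℝ) = γ i := by
      simpa [Module.Basis.mem_span_iff_repr_mem] using hγ
    choose k hk using this
    rw [Submodule.vadd_def, vadd_eq_add, add_comm, ← hf y k]
    simp [hk]
  calc ∫ t in Icc 0 1, f (a + t)
      = ∫ t in ZSpan.fundamentalDomain (Pi.basisFun ℝ ι), f (a + t) :=
        setIntegral_congr_set hD_ae.symm
    _ = ∫ y in a +ᵥ ZSpan.fundamentalDomain (Pi.basisFun ℝ ι), f y :=
      ((measurePreserving_add_left volume a).setIntegral_image_emb
        (measurableEmbedding_addLeft a) f _).symm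
    _ = ∫ y in ZSpan.fundamentalDomain (Pi.basisFun ℝ ι), f y :=
      (hD.vadd_of_comm a).setIntegral_eq hD hinv
    _ = ∫ y in Icc 0 1, f y := setIntegral_congr_set hD_ae

theorem norm_setIntegral_sub_le_of_forall_norm_sub_le {α E : Type*} [MeasurableSpace α]
    [NormedAddCommGroup E] [NormedSpace ℝ E] [CompleteSpace E] {μ : Measure α} {S : Set α}
    (hS : μ.real S = 1) {g : α → E} (hg : IntegrableOn g S μ) {c : E} {C : ℝ} (hC : ∀ t ∈ S, ‖g t - c‖ ≤ C) :
    ‖(∫ t in S, g t ∂μ) - c‖ ≤ C := by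
  have hfin : μ S ≠ ⊤ := fun h => by simp [measureReal_def, h] at hS
  calc ‖(∫ t in S, g t ∂μ) - c‖ = ‖∫ t in S, (g t - c) ∂μ‖ := by
        rw [integral_sub hg (integrableOn_const hfin), setIntegral_const, hS, one_smul]
    _ ≤ C * μ.real S := norm_setIntegral_le_of_norm_le_const hfin.lt_top hC
    _ = C := by rw [hS, mul_one]

theorem exists_pos_forall_dist_lt_of_intPeriodic {X ι : Type*} [PseudoMetricSpace X] [Fintype ι]
    {φ : X → (ι → ℝ) → ℝ} (hφ : Continuous (uncurry φ)) {K : Set X} (hK : IsCompact K)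
    (hsupp : ∀ x ∉ K, ∀ y, φ x y = 0)
    (hper : ∀ x y (k : ι → ℤ), φ x (y + fun i => (k i : ℝ)) = φ x y) {η : ℝ} (hη : 0 < η) :
    ∃ ρ > 0, ∀ x x' y, dist x x' < ρ → dist (φ x y) (φ x' y) < η := by
  obtain ⟨ρ, hρ, hclose⟩ := Metric.mem_uniformity_dist.1 <|
    (hK.prod (isCompact_Icc (a := (0 : ι → ℝ)) (b := 1))).uniformContinuousAt_of_continuousAt
      (uncurry φ) (fun _ _ => hφ.continuousAt) (Metric.dist_mem_uniformity hη)
  have hnear : ∀ x ∈ K, ∀ x' y, dist x x' < ρ → dist (φ x y) (φ x' y) < η := by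
    intro x hx x' y hxx'
    have hfract : (y - fun i => (⌊y i⌋ : ℝ)) ∈ Icc 0 1 :=
      ⟨fun i => Int.fract_nonneg (y i), fun i => (Int.fract_lt_one (y i)).le⟩
    rw [← sub_add_cancel y (fun i => (⌊y i⌋ : ℝ)), hper, hper]
    exact hclose (a := (x, _)) (b := (x', _))
      (by rwa [Prod.dist_eq, dist_self, max_eq_left dist_nonneg]) ⟨hx, hfract⟩
  refine ⟨ρ, hρ, fun x x' y hxx' => ?_⟩
  by_cases hx : x ∈ K
  · exact hnear x hx x' y hxx'
  by_cases hx' : x' ∈ K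
  · rw [dist_comm]
    exact hnear x' hx' x y (by rwa [dist_comm])
  · simpa [hsupp x hx, hsupp x' hx'] using hη

theorem abs_integral_comp_add_right_sub_integral_le {E Y : Type*} [AddGroup E]
    [TopologicalSpace E] [IsTopologicalAddGroup E] [MeasurableSpace E] [OpensMeasurableSpace E]
    [MeasurableAdd E] [TopologicalSpace Y] {μ : Measure E}
    [μ.IsAddRightInvariant] [IsFiniteMeasureOnCompacts μ] {φ : E → Y → ℝ}
    (hφ : Continuous (uncurry φ)) {K : Set E} (hK : IsCompact K)
    (hsupp : ∀ x ∉ K, ∀ y, φ x y = 0) {g : E → Y} (hg : Continuous g) {h : E} {η : ℝ}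
    (hη : ∀ x y, |φ (x + h) y - φ x y| ≤ η) :
    |∫ x, φ (x + h) (g x) ∂μ - ∫ x, φ x (g x) ∂μ| ≤ 2 * η * μ.real K := by
  have hKh : IsCompact ((· + h) ⁻¹' K) := (Homeomorph.addRight h).isCompact_preimage.2 hK
  have hint₁ : Integrable (fun x => φ (x + h) (g x)) μ :=
    (hφ.comp ((continuous_add_const h).prodMk hg)).integrable_of_hasCompactSupport
      (HasCompactSupport.intro hKh fun x hx => hsupp _ hx _)
  have hint₂ : Integrable (fun x => φ x (g x)) μ :=
    (hφ.comp (continuous_id.prodMk hg)).integrable_of_hasCompactSupport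
      (HasCompactSupport.intro hK fun x hx => hsupp _ hx _)
  have hvanish : ∀ x ∉ K ∪ (· + h) ⁻¹' K, φ (x + h) (g x) - φ x (g x) = 0 := by
    intro x hx
    rw [mem_union, not_or] at hx
    rw [hsupp _ hx.2, hsupp _ hx.1, sub_zero]
  rw [← integral_sub hint₁ hint₂, ← setIntegral_eq_integral_of_forall_compl_eq_zero hvanish,
    ← Real.norm_eq_abs]
  calc ‖∫ x in K ∪ (· + h) ⁻¹' K, φ (x + h) (g x) - φ x (g x) ∂μ‖
      ≤ η * μ.real (K ∪ (· + h) ⁻¹' K) :=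
        norm_setIntegral_le_of_norm_le_const (hK.union hKh).measure_lt_top fun x _ => hη x (g x)
    _ ≤ η * (μ.real K + μ.real ((· + h) ⁻¹' K)) := by
        gcongr
        · exact (abs_nonneg _).trans (hη 0 (g 0))
        · exact measureReal_union_le _ _
    _ = 2 * η * μ.real K := by
        rw [measureReal_def, measureReal_def, measure_preimage_add_right]
        ring

theorem abs_integral_comp_smul_add_add_sub_le {E : Type*} [NormedAddCommGroup E]
    [NormedSpace ℝ E] [MeasurableSpace E] [BorelSpace E] {μ : Measure E}
    [μ.IsAddRightInvariant] [IsFiniteMeasureOnCompacts μ] {φ : E → E → ℝ}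
    (hφ : Continuous (uncurry φ)) {K : Set E} (hK : IsCompact K)
    (hsupp : ∀ x ∉ K, ∀ y, φ x y = 0) {ε η : ℝ} (hε : ε ≠ 0) (s t : E)
    (hη : ∀ x y, |φ (x - ε • t) y - φ x y| ≤ η) :
    |∫ x, φ x (ε⁻¹ • x + s + t) ∂μ - ∫ x, φ x (ε⁻¹ • x + s) ∂μ| ≤ 2 * η * μ.real K := by
  have hsub : ∫ x, φ x (ε⁻¹ • x + s + t) ∂μ = ∫ x, φ (x + -(ε • t)) (ε⁻¹ • x + s) ∂μ := by
    rw [← integral_add_right_eq_self _ (-(ε • t))]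
    congr with x
    rw [smul_add, smul_neg, inv_smul_smul₀ hε]
    abel_nf
  rw [hsub]
  exact abs_integral_comp_add_right_sub_integral_le hφ hK hsupp (by fun_prop)
    (by simpa only [sub_eq_add_neg] using hη)

theorem integrable_prod_restrict_of_isCompact {X Y E : Type*} [TopologicalSpace X] [T2Space X]
    [MeasurableSpace X] [TopologicalSpace Y] [T2Space Y] [MeasurableSpace Y]
    [OpensMeasurableSpace X] [OpensMeasurableSpace Y] [SecondCountableTopologyEither X Y]
    [NormedAddCommGroup E] {μ : Measure X} {ν : Measure Y} [IsFiniteMeasureOnCompacts μ]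
    [IsFiniteMeasureOnCompacts ν] [SFinite μ] [SFinite ν] {f : X × Y → E} (hf : Continuous f)
    {K : Set X} (hK : IsCompact K) (hsupp : ∀ p : X × Y, p.1 ∉ K → f p = 0) {Q : Set Y}
    (hQ : IsCompact Q) :
    Integrable f (μ.prod (ν.restrict Q)) := by
  rw [← Measure.restrict_univ (μ := μ), Measure.prod_restrict, ← IntegrableOn]
  exact (hf.continuousOn.integrableOn_compact (hK.prod hQ)).of_forall_sdiff_eq_zero
    (MeasurableSet.univ.prod hQ.measurableSet) fun p hp => hsupp p fun h => hp.2 ⟨h, hp.1.2⟩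

section ShiftAverage

variable {X ι : Type*} [TopologicalSpace X] [T2Space X] [MeasurableSpace X]
  [OpensMeasurableSpace X] [Fintype ι] {μ : Measure X} [IsFiniteMeasureOnCompacts μ] [SFinite μ]
  {φ : X → (ι → ℝ) → ℝ} {K : Set X} {a : X → ι → ℝ}

theorem integrableOn_Icc_integral_comp_add (hφ : Continuous (uncurry φ)) (hK : IsCompact K)
    (hsupp : ∀ x ∉ K, ∀ y, φ x y = 0) (ha : Continuous a) :
    IntegrableOn (fun t => ∫ x, φ x (a x + t) ∂μ) (Icc 0 1) :=
  (integrable_prod_restrict_of_isCompact (f := uncurry fun x t => φ x (a x + t))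
    (by fun_prop) hK (fun p hp => hsupp _ hp _) isCompact_Icc).integral_prod_right

theorem setIntegral_Icc_integral_comp_add_of_intPeriodic (hφ : Continuous (uncurry φ))
    (hK : IsCompact K) (hsupp : ∀ x ∉ K, ∀ y, φ x y = 0)
    (hper : ∀ x y (k : ι → ℤ), φ x (y + fun i => (k i : ℝ)) = φ x y) (ha : Continuous a) :
    ∫ t in Icc 0 1, ∫ x, φ x (a x + t) ∂μ = ∫ x, (∫ y in Icc 0 1, φ x y) ∂μ := by
  rw [← integral_integral_swap (integrable_prod_restrict_of_isCompact
    (f := uncurry fun x t => φ x (a x + t)) (by fun_prop) hK (fun p hp => hsupp _ hp _)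
    isCompact_Icc)]
  exact integral_congr_ae (ae_of_all _ fun x => setIntegral_Icc_add_eq_of_intPeriodic (hper x) _)

end ShiftAverage

theorem oscillating_mean_value_uniform_shift_general
    (d : ℕ) (φ : (Fin d → ℝ) → (Fin d → ℝ) → ℝ)
    (hcont : Continuous fun p : (Fin d → ℝ) × (Fin d → ℝ) => φ p.1 p.2)
    (hsupp : ∃ K : Set (Fin d → ℝ), IsCompact K ∧ ∀ x ∉ K, ∀ y, φ x y = 0)
    (hper : ∀ (x y : Fin d → ℝ) (k : Fin d → ℤ), φ x (y + fun i => (k i : ℝ)) = φ x y) :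
    ∀ δ : ℝ, 0 < δ → ∃ ε₀ : ℝ, 0 < ε₀ ∧ ∀ ε : ℝ, 0 < ε → ε < ε₀ → ∀ s : Fin d → ℝ,
      |(∫ x : Fin d → ℝ, φ x (ε⁻¹ • x + s)) -
          ∫ x : Fin d → ℝ, ∫ y in Set.Icc (0 : Fin d → ℝ) 1, φ x y| < δ := by
  intro δ hδ
  obtain ⟨K, hK, hK0⟩ := hsupp
  set η := δ / (2 * (volume.real K + 1)) with hη_def
  have hη : 0 < η := by positivity
  obtain ⟨ρ, hρ, hφρ⟩ := exists_pos_forall_dist_lt_of_intPeriodic hcont hK hK0 hper hη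
  refine ⟨ρ, hρ, fun ε hε hερ s => ?_⟩
  have hshift : ∀ t ∈ Icc (0 : Fin d → ℝ) 1,
      ‖(∫ x, φ x (ε⁻¹ • x + s + t)) - ∫ x, φ x (ε⁻¹ • x + s)‖ ≤ 2 * η * volume.real K :=
    fun t ht => abs_integral_comp_smul_add_add_sub_le hcont hK hK0 hε.ne' s t fun x y =>
      (hφρ _ _ y (by
        rw [dist_eq_norm, sub_sub_cancel_left, norm_neg, norm_smul, Real.norm_of_nonneg hε.le]
        nlinarith [norm_le_one_of_mem_Icc_zero_one ht])).le
  have ha : Continuous fun x : Fin d → ℝ => ε⁻¹ • x + s := by fun_prop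
  have hQ : volume.real (Icc (0 : Fin d → ℝ) 1) = 1 := by simp [measureReal_def, Real.volume_Icc_pi]
  rw [← setIntegral_Icc_integral_comp_add_of_intPeriodic hcont hK hK0 hper ha,
    abs_sub_comm, ← Real.norm_eq_abs]
  calc _ ≤ 2 * η * volume.real K := norm_setIntegral_sub_le_of_forall_norm_sub_le hQ
        (integrableOn_Icc_integral_comp_add hcont hK hK0 ha) hshift
    _ < δ := by
        have : 2 * η * (volume.real K + 1) = δ := by rw [hη_def]; field_simp
        linarith

/-- Shift-uniform mean-value lemma.  If `φ(x, y)` is continuous, compactly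
supported in `x` and `ℤ^d`-periodic in `y`, then
`∫ φ(x, x/ε + s) dx → ∫∫_{[0,1]^d} φ(x, y) dy dx` as `ε → 0⁺`, uniformly with respect to
arbitrary shifts `s ∈ ℝ^d` of the fast variable. -/
theorem oscillating_mean_value_uniform_shift
    (d : ℕ) (hd : 1 ≤ d) (φ : (Fin d → ℝ) → (Fin d → ℝ) → ℝ)
    (hcont : Continuous fun p : (Fin d → ℝ) × (Fin d → ℝ) => φ p.1 p.2)
    (hsupp : ∃ K : Set (Fin d → ℝ), IsCompact K ∧ ∀ x ∉ K, ∀ y, φ x y = 0)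
    (hper : ∀ (x y : Fin d → ℝ) (k : Fin d → ℤ), φ x (y + fun i => (k i : ℝ)) = φ x y) :
    ∀ δ : ℝ, 0 < δ → ∃ ε₀ : ℝ, 0 < ε₀ ∧ ∀ ε : ℝ, 0 < ε → ε < ε₀ → ∀ s : Fin d → ℝ,
      |(∫ x : Fin d → ℝ, φ x (ε⁻¹ • x + s)) -
          ∫ x : Fin d → ℝ, ∫ y in Set.Icc (0 : Fin d → ℝ) 1, φ x y| < δ :=
  oscillating_mean_value_uniform_shift_general d φ hcont hsupp hper
end

section
/- Let d ≥ 1, let g : ℝ^d → ℝ be smooth (C^∞) and ℤ^d-periodic with ∫_{[0,1]^d} g(y) dy = 0. Then there exists a constant C ≥ 0, depending only on g and d, such that for every continuously differentiable compactly supported u : ℝ^d → ℝ and every ε > 0 one has |∫_{ℝ^d} u(x)·g(x/ε) dx| ≤ C·ε·∫_{ℝ^d} |∇u(x)| dx. -/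
open MeasureTheory

namespace OscAux

variable {m : ℕ}

lemma finiteCubeR : IsFiniteMeasure ((volume : Measure ℝ).restrict (Set.Icc 0 1)) :=
  ⟨by rw [Measure.restrict_apply_univ]; exact (isCompact_Icc).measure_lt_top⟩

lemma finiteCube (k : ℕ) :
    IsFiniteMeasure ((volume : Measure (Fin k → ℝ)).restrict (Set.Icc 0 1)) :=
  ⟨by rw [Measure.restrict_apply_univ]; exact (isCompact_Icc).measure_lt_top⟩

lemma cube_vol (k : ℕ) : (volume : Measure (Fin k → ℝ)) (Set.Icc 0 1) = 1 := by
  rw [Real.volume_Icc_pi]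
  simp

lemma cube_vol_toReal (k : ℕ) :
    ((volume : Measure (Fin k → ℝ)) (Set.Icc 0 1)).toReal = 1 := by
  rw [cube_vol]; simp

/-- One-coordinate splitting of the integral over the unit cube. -/
lemma cube_split (i : Fin (m + 1)) (h : (Fin (m + 1) → ℝ) → ℝ) (hc : Continuous h) :
    ∫ y in Set.Icc (0 : Fin (m + 1) → ℝ) 1, h y
      = ∫ t in Set.Icc (0 : ℝ) 1, ∫ z in Set.Icc (0 : Fin m → ℝ) 1,
          h (Fin.insertNth i t z) := by
  haveI := finiteCubeR
  haveI := finiteCube m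
  set e := MeasurableEquiv.piFinSuccAbove (fun _ : Fin (m + 1) => ℝ) i with he
  have mp : MeasurePreserving e volume volume :=
    volume_preserving_piFinSuccAbove _ i
  have hpre : e.symm ⁻¹' (Set.Icc (0 : Fin (m + 1) → ℝ) 1)
      = (Set.Icc (0 : ℝ) 1) ×ˢ (Set.Icc (0 : Fin m → ℝ) 1) := by
    ext ⟨t, z⟩
    simp only [Set.mem_preimage, he, MeasurableEquiv.piFinSuccAbove_symm_apply,
      Set.mem_prod]
    rw [show ((Fin.insertNthEquiv (fun _ : Fin (m + 1) => ℝ) i) (t, z)) = i.insertNth t z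
      from rfl, Fin.insertNth_mem_Icc]
    simp [Set.mem_Icc, Pi.le_def]
  have key := (mp.symm).setIntegral_preimage_emb e.symm.measurableEmbedding h
      (Set.Icc (0 : Fin (m + 1) → ℝ) 1)
  rw [hpre] at key
  rw [← key]
  have hins : Continuous fun p : ℝ × (Fin m → ℝ) => h (Fin.insertNth i p.1 p.2) :=
    hc.comp (Continuous.finInsertNth (A := fun _ : Fin (m + 1) => ℝ) i
      continuous_fst continuous_snd)
  have hesymm : ∀ p : ℝ × (Fin m → ℝ), e.symm p = Fin.insertNth i p.1 p.2 := fun p => by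
    rfl
  simp only [hesymm]
  have hint : Integrable (fun p : ℝ × (Fin m → ℝ) => h (Fin.insertNth i p.1 p.2))
      (((volume : Measure ℝ).restrict (Set.Icc 0 1)).prod
        ((volume : Measure (Fin m → ℝ)).restrict (Set.Icc 0 1))) := by
    rw [Measure.prod_restrict]
    exact hins.continuousOn.integrableOn_compact (isCompact_Icc.prod isCompact_Icc)
  rw [Measure.volume_eq_prod ℝ (Fin m → ℝ), ← Measure.prod_restrict]
  rw [integral_prod _ hint]

lemma cube_slice (i : Fin (m + 1)) (h : (Fin (m + 1) → ℝ) → ℝ) (hc : Continuous h) (t : ℝ) :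
    ∫ y in Set.Icc (0 : Fin (m + 1) → ℝ) 1, h (Function.update y i t)
      = ∫ z in Set.Icc (0 : Fin m → ℝ) 1, h (Fin.insertNth i t z) := by
  have hrm : Continuous fun y : Fin (m + 1) → ℝ => Fin.removeNth i y :=
    continuous_pi fun j => continuous_apply _
  have h2c : Continuous fun y : Fin (m + 1) → ℝ =>
      h (Fin.insertNth i t (Fin.removeNth i y)) :=
    hc.comp (Continuous.finInsertNth (A := fun _ : Fin (m + 1) => ℝ) i
      continuous_const hrm)
  have e1 : ∫ y in Set.Icc (0 : Fin (m + 1) → ℝ) 1, h (Function.update y i t)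
      = ∫ y in Set.Icc (0 : Fin (m + 1) → ℝ) 1,
          h (Fin.insertNth i t (Fin.removeNth i y)) := by
    simp only [Fin.insertNth_removeNth]
  rw [e1, cube_split i _ h2c]
  have e2 : ∀ s : ℝ, ∀ z : Fin m → ℝ,
      Fin.removeNth (α := fun _ => ℝ) i (Fin.insertNth (α := fun _ => ℝ) i s z) = z :=
    fun s z => by funext j; simp [Fin.removeNth]
  simp only [e2]
  rw [setIntegral_const]
  simp [Real.volume_Icc]

lemma cube_fubini (i : Fin (m + 1)) (h : (Fin (m + 1) → ℝ) → ℝ) (hc : Continuous h) :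
    ∫ t in Set.Icc (0 : ℝ) 1, ∫ y in Set.Icc (0 : Fin (m + 1) → ℝ) 1,
        h (Function.update y i t)
      = ∫ y in Set.Icc (0 : Fin (m + 1) → ℝ) 1, h y := by
  rw [cube_split i h hc]
  exact setIntegral_congr_fun measurableSet_Icc fun t _ => cube_slice i h hc t

noncomputable def mix (i : ℕ) (y x : Fin (m + 1) → ℝ) : Fin (m + 1) → ℝ :=
  fun j => if (j : ℕ) < i then y j else x j

lemma continuous_mix (i : ℕ) :
    Continuous fun p : (Fin (m + 1) → ℝ) × (Fin (m + 1) → ℝ) => mix i p.1 p.2 := by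
  apply continuous_pi
  intro j
  by_cases hj : (j : ℕ) < i
  · simpa [mix, hj, Function.comp_def] using (continuous_apply j).comp (continuous_fst)
  · simpa [mix, hj, Function.comp_def] using (continuous_apply j).comp (continuous_snd)

noncomputable def Fav (g : (Fin (m + 1) → ℝ) → ℝ) (i : ℕ) (x : Fin (m + 1) → ℝ) : ℝ :=
  ∫ y in Set.Icc (0 : Fin (m + 1) → ℝ) 1, g (mix i y x)

section Fav

variable {g : (Fin (m + 1) → ℝ) → ℝ} {Mg : ℝ}
  (hgc : Continuous g) (hMg : ∀ x, |g x| ≤ Mg)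

include hgc in
lemma Fav_continuous {Mg : ℝ} (hMg : ∀ x, |g x| ≤ Mg) (i : ℕ) :
    Continuous (Fav g i) := by
  haveI := finiteCube (m + 1)
  apply continuous_of_dominated (bound := fun _ => Mg)
  · intro x
    exact ((hgc.comp ((continuous_mix i).comp
      (continuous_id.prodMk continuous_const)))).aestronglyMeasurable
  · intro x
    exact Filter.Eventually.of_forall fun y => by
      simpa [Real.norm_eq_abs] using hMg (mix i y x)
  · exact integrable_const Mg
  · exact Filter.Eventually.of_forall fun y =>
      hgc.comp ((continuous_mix i).comp (continuous_const.prodMk continuous_id))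

include hgc hMg in
lemma Fav_bound (i : ℕ) (x : Fin (m + 1) → ℝ) : |Fav g i x| ≤ Mg := by
  haveI := finiteCube (m + 1)
  have h := norm_setIntegral_le_of_norm_le_const (μ := volume)
    (s := Set.Icc (0 : Fin (m + 1) → ℝ) 1) (f := fun y => g (mix i y x)) (C := Mg)
    (by rw [cube_vol]; exact ENNReal.one_lt_top)
    (fun y _ => by simpa [Real.norm_eq_abs] using hMg (mix i y x))
  rw [measureReal_def, cube_vol_toReal, mul_one] at h
  simpa [Fav, Real.norm_eq_abs] using h

include hgc in
lemma Fav_succ (i : Fin (m + 1)) (x : Fin (m + 1) → ℝ) :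
    ∫ t in Set.Icc (0 : ℝ) 1, Fav g (i : ℕ) (Function.update x i t)
      = Fav g ((i : ℕ) + 1) x := by
  have hc : Continuous fun y => g (mix ((i : ℕ) + 1) y x) :=
    hgc.comp ((continuous_mix _).comp (continuous_id.prodMk continuous_const))
  have hfub : ∫ t in Set.Icc (0 : ℝ) 1, ∫ y in Set.Icc (0 : Fin (m + 1) → ℝ) 1,
        g (mix ((i : ℕ) + 1) (Function.update y i t) x)
      = Fav g ((i : ℕ) + 1) x := cube_fubini i (fun y => g (mix ((i : ℕ) + 1) y x)) hc
  rw [← hfub]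
  apply setIntegral_congr_fun measurableSet_Icc
  intro t _
  have key : ∀ y, g (mix ((i : ℕ) + 1) (Function.update y i t) x)
      = g (mix (i : ℕ) y (Function.update x i t)) := by
    intro y
    congr 1
    funext j
    rcases lt_trichotomy ((j : ℕ)) ((i : ℕ)) with hj | hj | hj
    · have hne : j ≠ i := Fin.ne_of_val_ne (Nat.ne_of_lt hj)
      simp [mix, Function.update_apply, hne, hj, Nat.lt_succ_of_lt hj]
    · have hji : j = i := Fin.ext hj
      subst hji
      simp [mix, Nat.lt_succ_self, Nat.lt_irrefl]
    · have hne : j ≠ i := Fin.ne_of_val_ne (Nat.ne_of_gt hj)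
      have h1 : ¬ ((j : ℕ) < (i : ℕ) + 1) := by omega
      have h2 : ¬ ((j : ℕ) < (i : ℕ)) := by omega
      simp [mix, Function.update_apply, hne, h1, h2]
  simp only [Fav, key]

end Fav

section FavMore

variable {g : (Fin (m + 1) → ℝ) → ℝ}

lemma Fav_periodic (hper : ∀ (x : Fin (m + 1) → ℝ) (k : Fin (m + 1) → ℤ),
      g (x + fun j => (k j : ℝ)) = g x)
    (i : ℕ) (x : Fin (m + 1) → ℝ) (k : Fin (m + 1) → ℤ) :
    Fav g i (x + fun j => (k j : ℝ)) = Fav g i x := by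
  have key : ∀ y, g (mix i y (x + fun j => (k j : ℝ))) = g (mix i y x) := by
    intro y
    have hmix : mix i y (x + fun j => (k j : ℝ))
        = mix i y x + fun j : Fin (m + 1) => (((if (j : ℕ) < i then 0 else k j : ℤ)) : ℝ) := by
      funext j
      by_cases hj : (j : ℕ) < i <;> simp [mix, hj]
    rw [hmix, hper]
  simp only [Fav, key]

lemma Fav_zero (x : Fin (m + 1) → ℝ) : Fav g 0 x = g x := by
  have key : ∀ y : Fin (m + 1) → ℝ, mix 0 y x = x := by
    intro y; funext j; simp [mix]
  simp only [Fav, key]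
  rw [setIntegral_const, measureReal_def, cube_vol_toReal, one_smul]

lemma Fav_last (hmean : (∫ y in Set.Icc (0 : Fin (m + 1) → ℝ) 1, g y) = 0)
    (x : Fin (m + 1) → ℝ) : Fav g (m + 1) x = 0 := by
  have key : ∀ y : Fin (m + 1) → ℝ, mix (m + 1) y x = y := by
    intro y; funext j; simp [mix, j.isLt]
  simp only [Fav, key]
  exact hmean

lemma Fav_update_indep (i : Fin (m + 1)) (x : Fin (m + 1) → ℝ) (a : ℝ) :
    Fav g ((i : ℕ) + 1) (Function.update x i a) = Fav g ((i : ℕ) + 1) x := by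
  have key : ∀ y, mix ((i : ℕ) + 1) y (Function.update x i a)
      = mix ((i : ℕ) + 1) y x := by
    intro y; funext j
    by_cases hj : (j : ℕ) < (i : ℕ) + 1
    · simp [mix, hj]
    · have hne : j ≠ i := fun h => hj (by simp [h])
      simp [mix, hj, Function.update_apply, hne]
  simp only [Fav, key]

end FavMore

noncomputable def Gfun (g : (Fin (m + 1) → ℝ) → ℝ) (i : Fin (m + 1))
    (x : Fin (m + 1) → ℝ) : ℝ :=
  ∫ t in (0 : ℝ)..(x i), (Fav g (i : ℕ) (Function.update x i t) - Fav g ((i : ℕ) + 1) x)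

section G

variable {g : (Fin (m + 1) → ℝ) → ℝ} {Mg : ℝ}
  (hgc : Continuous g) (hMg : ∀ x, |g x| ≤ Mg)

include hgc hMg

lemma psi_cont (i : Fin (m + 1)) :
    Continuous fun p : (Fin (m + 1) → ℝ) × ℝ =>
      Fav g (i : ℕ) (Function.update p.1 i p.2) - Fav g ((i : ℕ) + 1) p.1 :=
  ((Fav_continuous hgc hMg _).comp
    (continuous_fst.update i continuous_snd)).sub
    ((Fav_continuous hgc hMg _).comp continuous_fst)

lemma Gfun_continuous (i : Fin (m + 1)) : Continuous (Gfun g i) := by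
  have hunc : Continuous (Function.uncurry fun (x : Fin (m + 1) → ℝ) (t : ℝ) =>
      Fav g (i : ℕ) (Function.update x i t) - Fav g ((i : ℕ) + 1) x) :=
    psi_cont hgc hMg i
  exact intervalIntegral.continuous_parametric_intervalIntegral_of_continuous hunc
    (continuous_apply i)

omit hgc hMg in
lemma update_add_single (i : Fin (m + 1)) (x : Fin (m + 1) → ℝ) (s : ℝ) :
    x + s • (Pi.single i 1 : Fin (m + 1) → ℝ) = Function.update x i (x i + s) := by
  funext j
  by_cases hj : j = i
  · subst hj; simp
  · simp [hj, Pi.single_apply, Function.update_apply]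

lemma Gfun_lineDeriv (i : Fin (m + 1)) (x : Fin (m + 1) → ℝ) :
    HasLineDerivAt ℝ (Gfun g i) (Fav g (i : ℕ) x - Fav g ((i : ℕ) + 1) x) x
      ((Pi.single i 1 : Fin (m + 1) → ℝ)) := by
  set ψ : ℝ → ℝ := fun t => Fav g (i : ℕ) (Function.update x i t) - Fav g ((i : ℕ) + 1) x
    with hψ
  have hψc : Continuous ψ :=
    (psi_cont hgc hMg i).comp (continuous_const.prodMk continuous_id)
  have hfun : (fun s : ℝ => Gfun g i (x + s • (Pi.single i 1 : Fin (m + 1) → ℝ)))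
      = fun s : ℝ => ∫ t in (0 : ℝ)..(x i + s), ψ t := by
    funext s
    rw [update_add_single]
    have e1 : Function.update x i (x i + s) i = x i + s := Function.update_self _ _ _
    have e2 : ∀ t : ℝ, Function.update (Function.update x i (x i + s)) i t
        = Function.update x i t := fun t => Function.update_idem _ _ _
    have e3 : Fav g ((i : ℕ) + 1) (Function.update x i (x i + s))
        = Fav g ((i : ℕ) + 1) x := Fav_update_indep i x (x i + s)
    simp only [Gfun, e1, e2, e3, hψ]
  have hH : ∀ b : ℝ, HasDerivAt (fun a : ℝ => ∫ t in (0 : ℝ)..a, ψ t) (ψ b) b := fun b =>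
    intervalIntegral.integral_hasDerivAt_right (hψc.intervalIntegrable (μ := volume) _ _)
      (hψc.stronglyMeasurable.stronglyMeasurableAtFilter) hψc.continuousAt
  have hinner : HasDerivAt (fun s : ℝ => x i + s) 1 0 :=
    (hasDerivAt_id (0 : ℝ)).const_add (x i)
  have hcomp := (hH (x i + 0)).comp (0 : ℝ) hinner
  rw [HasLineDerivAt, hfun]
  simpa [Function.comp_def, Function.update_eq_self, hψ] using hcomp

lemma Gfun_bound
    (hper : ∀ (x : Fin (m + 1) → ℝ) (k : Fin (m + 1) → ℤ),
      g (x + fun j => (k j : ℝ)) = g x)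
    (i : Fin (m + 1)) (x : Fin (m + 1) → ℝ) :
    |Gfun g i x| ≤ 2 * Mg := by
  haveI := finiteCubeR
  set ψ : ℝ → ℝ := fun t => Fav g (i : ℕ) (Function.update x i t) - Fav g ((i : ℕ) + 1) x
    with hψ
  have hψc : Continuous ψ :=
    (psi_cont hgc hMg i).comp (continuous_const.prodMk continuous_id)
  have hψb : ∀ t, |ψ t| ≤ 2 * Mg := by
    intro t
    calc |ψ t| ≤ |Fav g (i : ℕ) (Function.update x i t)| + |Fav g ((i : ℕ) + 1) x| :=
          abs_sub _ _
    _ ≤ Mg + Mg := add_le_add (Fav_bound hgc hMg _ _) (Fav_bound hgc hMg _ _)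
    _ = 2 * Mg := by ring
  have hψper : Function.Periodic ψ 1 := by
    intro t
    have hupd : Function.update x i (t + 1)
        = Function.update x i t + fun j : Fin (m + 1) =>
            (((if j = i then 1 else 0 : ℤ)) : ℝ) := by
      funext j
      by_cases hj : j = i
      · subst hj; simp
      · simp [Function.update_apply, hj]
    show Fav g (i : ℕ) (Function.update x i (t + 1)) - _ = _
    rw [hupd, Fav_periodic hper]
  have hmean0 : ∫ t in (0 : ℝ)..1, ψ t = 0 := by
    rw [intervalIntegral.integral_of_le zero_le_one, ← integral_Icc_eq_integral_Ioc]
    have hint1 : IntegrableOn (fun t => Fav g (i : ℕ) (Function.update x i t))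
        (Set.Icc (0 : ℝ) 1) volume := by
      apply Continuous.integrableOn_Icc
      exact (Fav_continuous hgc hMg _).comp (continuous_const.update i continuous_id)
    rw [hψ]
    rw [integral_sub hint1 (integrable_const _)]
    rw [Fav_succ hgc i x, setIntegral_const]
    simp [Real.volume_Icc]
  set H : ℝ → ℝ := fun a => ∫ t in (0 : ℝ)..a, ψ t with hH
  have hHper : Function.Periodic H 1 := by
    intro a
    have h1 := intervalIntegral.integral_add_adjacent_intervals
      (hψc.intervalIntegrable (μ := volume) 0 a) (hψc.intervalIntegrable (μ := volume) a (a + 1))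
    have h2 : ∫ t in a..(a + 1), ψ t = ∫ t in (0 : ℝ)..(0 + 1), ψ t :=
      hψper.intervalIntegral_add_eq a 0
    simp only [zero_add] at h2
    rw [h2, hmean0, add_zero] at h1
    exact h1.symm
  have hGx : Gfun g i x = H (x i) := rfl
  have hfrac : H (x i) = H (Int.fract (x i)) := by
    have := hHper.sub_int_mul_eq (x := x i) (n := ⌊x i⌋)
    rw [mul_one] at this
    rw [Int.fract]
    exact this.symm
  have hb1 : |Int.fract (x i)| ≤ 1 := by
    rw [abs_of_nonneg (Int.fract_nonneg _)]
    exact le_of_lt (Int.fract_lt_one _)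
  have hbound : |H (Int.fract (x i))| ≤ 2 * Mg * |Int.fract (x i) - 0| := by
    have := intervalIntegral.norm_integral_le_of_norm_le_const (C := 2 * Mg)
      (f := ψ) (a := (0 : ℝ)) (b := Int.fract (x i))
      (fun t _ => by simpa [Real.norm_eq_abs] using hψb t)
    simpa [Real.norm_eq_abs] using this
  rw [hGx, hfrac]
  calc |H (Int.fract (x i))| ≤ 2 * Mg * |Int.fract (x i) - 0| := hbound
  _ ≤ 2 * Mg * 1 := by
      have hMg0 : 0 ≤ Mg := le_trans (abs_nonneg _) (hMg 0)
      apply mul_le_mul_of_nonneg_left _ (by linarith)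
      · simpa using hb1
  _ = 2 * Mg := mul_one _

end G

end OscAux


/-- `O(ε)` estimate for integrals against mean-zero oscillating periodic
weights: if `g : ℝ^d → ℝ` is smooth, `ℤ^d`-periodic, and has zero mean over `[0,1]^d`,
then there is `C ≥ 0` (depending only on `g` and `d`) such that for every `C¹` compactly
supported `u` and every `ε > 0`,
`|∫ u(x) g(x/ε) dx| ≤ C ε ∫ |∇u|`. -/
theorem oscillating_mean_zero_estimate
    (d : ℕ) (hd : 1 ≤ d) (g : (Fin d → ℝ) → ℝ)
    (hg : ContDiff ℝ (⊤ : ℕ∞) g)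
    (hper : ∀ (x : Fin d → ℝ) (k : Fin d → ℤ), g (x + fun i => (k i : ℝ)) = g x)
    (hmean : (∫ y in Set.Icc (0 : Fin d → ℝ) 1, g y) = 0) :
    ∃ C : ℝ, 0 ≤ C ∧ ∀ u : (Fin d → ℝ) → ℝ, ContDiff ℝ 1 u → HasCompactSupport u →
      ∀ ε : ℝ, 0 < ε →
        |∫ x : Fin d → ℝ, u x * g (ε⁻¹ • x)| ≤
          C * ε * ∫ x : Fin d → ℝ, ‖fderiv ℝ u x‖ := by
  obtain ⟨m, rfl⟩ : ∃ m, d = m + 1 := ⟨d - 1, by omega⟩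
  clear hd
  have hgc : Continuous g := hg.continuous
  -- a uniform bound for `g` via periodicity
  obtain ⟨Mg, hMg⟩ : ∃ M, ∀ x, |g x| ≤ M := by
    obtain ⟨M, hM⟩ := (isCompact_Icc (a := (0 : Fin (m + 1) → ℝ))
      (b := 1)).exists_bound_of_continuousOn hgc.continuousOn
    refine ⟨M, fun x => ?_⟩
    have hk : x + (fun j => ((-⌊x j⌋ : ℤ) : ℝ)) ∈ Set.Icc (0 : Fin (m + 1) → ℝ) 1 := by
      constructor
      · intro j
        have := Int.fract_nonneg (x j)
        simp only [Pi.add_apply, Pi.zero_apply]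
        push_cast
        rw [Int.fract] at this
        linarith
      · intro j
        have := le_of_lt (Int.fract_lt_one (x j))
        simp only [Pi.add_apply, Pi.one_apply]
        push_cast
        rw [Int.fract] at this
        linarith
    have hpx := hper x (fun j => -⌊x j⌋)
    calc |g x| = |g (x + fun j => ((-⌊x j⌋ : ℤ) : ℝ))| := by rw [hpx]
    _ ≤ M := by simpa [Real.norm_eq_abs] using hM _ hk
  have hMg0 : 0 ≤ Mg := le_trans (abs_nonneg _) (hMg 0)
  refine ⟨(m + 1) * (2 * Mg), by positivity, ?_⟩
  intro u hu hsupp ε hε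
  have hεne : (ε : ℝ) ≠ 0 := ne_of_gt hε
  set I := ∫ x : Fin (m + 1) → ℝ, ‖fderiv ℝ u x‖ with hI
  have hucont : Continuous u := hu.continuous
  have hu'cont : Continuous (fderiv ℝ u) := hu.continuous_fderiv one_ne_zero
  have hui : ∀ i : Fin (m + 1),
      Continuous fun x => fderiv ℝ u x ((Pi.single i 1 : Fin (m + 1) → ℝ)) :=
    fun i => hu'cont.clm_apply continuous_const
  have hfsupp : HasCompactSupport (fderiv ℝ u) := hsupp.fderiv (𝕜 := ℝ)
  have huisupp : ∀ i : Fin (m + 1),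
      HasCompactSupport fun x => fderiv ℝ u x ((Pi.single i 1 : Fin (m + 1) → ℝ)) :=
    fun i => hfsupp.comp_left
      (g := fun L : (Fin (m + 1) → ℝ) →L[ℝ] ℝ => L (Pi.single i 1)) (by simp)
  have hsm : Continuous fun x : Fin (m + 1) → ℝ => ε⁻¹ • x :=
    continuous_id.const_smul ε⁻¹
  -- telescoping decomposition of g
  have hsum : ∀ y : Fin (m + 1) → ℝ,
      g y = ∑ i : Fin (m + 1), (OscAux.Fav g (i : ℕ) y - OscAux.Fav g ((i : ℕ) + 1) y) := by
    intro y
    rw [Fin.sum_univ_eq_sum_range (fun n => OscAux.Fav g n y - OscAux.Fav g (n + 1) y) (m + 1)]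
    rw [Finset.sum_range_sub' (fun n => OscAux.Fav g n y) (m + 1)]
    rw [OscAux.Fav_zero, OscAux.Fav_last hmean, sub_zero]
  -- integration by parts in direction i
  have hIBP : ∀ i : Fin (m + 1),
      ∫ x : Fin (m + 1) → ℝ, u x *
          (ε⁻¹ * (OscAux.Fav g (i : ℕ) (ε⁻¹ • x) - OscAux.Fav g ((i : ℕ) + 1) (ε⁻¹ • x)))
        = - ∫ x : Fin (m + 1) → ℝ,
            (fderiv ℝ u x ((Pi.single i 1 : Fin (m + 1) → ℝ))) * OscAux.Gfun g i (ε⁻¹ • x) := by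
    intro i
    have hχc : Continuous fun x : Fin (m + 1) → ℝ => OscAux.Gfun g i (ε⁻¹ • x) :=
      (OscAux.Gfun_continuous hgc hMg i).comp hsm
    have hφc : Continuous fun x : Fin (m + 1) → ℝ =>
        ε⁻¹ * (OscAux.Fav g (i : ℕ) (ε⁻¹ • x) - OscAux.Fav g ((i : ℕ) + 1) (ε⁻¹ • x)) :=
      continuous_const.mul
        (((OscAux.Fav_continuous hgc hMg _).comp hsm).sub
          ((OscAux.Fav_continuous hgc hMg _).comp hsm))
    have hlu : ∀ x, HasLineDerivAt ℝ u (fderiv ℝ u x ((Pi.single i 1 : Fin (m + 1) → ℝ))) x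
        ((Pi.single i 1 : Fin (m + 1) → ℝ)) :=
      fun x => ((hu.differentiable one_ne_zero x).hasFDerivAt).hasLineDerivAt _
    have hlχ : ∀ x, HasLineDerivAt ℝ (fun x : Fin (m + 1) → ℝ => OscAux.Gfun g i (ε⁻¹ • x))
        (ε⁻¹ * (OscAux.Fav g (i : ℕ) (ε⁻¹ • x) - OscAux.Fav g ((i : ℕ) + 1) (ε⁻¹ • x))) x
        ((Pi.single i 1 : Fin (m + 1) → ℝ)) := by
      intro x
      have hbase := OscAux.Gfun_lineDeriv hgc hMg i (ε⁻¹ • x)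
      rw [HasLineDerivAt] at hbase ⊢
      have hinner : HasDerivAt (fun s : ℝ => ε⁻¹ * s) ε⁻¹ 0 := by
        simpa using (hasDerivAt_id (0 : ℝ)).const_mul ε⁻¹
      have hbase' : HasDerivAt
          (fun s' : ℝ => OscAux.Gfun g i (ε⁻¹ • x + s' • (Pi.single i 1 : Fin (m + 1) → ℝ)))
          (OscAux.Fav g (i : ℕ) (ε⁻¹ • x) - OscAux.Fav g ((i : ℕ) + 1) (ε⁻¹ • x))
          (ε⁻¹ * 0) := by
        rwa [mul_zero]
      have hcomp := hbase'.comp (0 : ℝ) hinner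
      have hfun : ((fun s' : ℝ => OscAux.Gfun g i
            (ε⁻¹ • x + s' • (Pi.single i 1 : Fin (m + 1) → ℝ)))
          ∘ (fun s : ℝ => ε⁻¹ * s))
          = fun s : ℝ => OscAux.Gfun g i (ε⁻¹ • (x + s • (Pi.single i 1 : Fin (m + 1) → ℝ))) := by
        funext s
        simp only [Function.comp_apply]
        congr 1
        rw [smul_add, smul_smul]
      rw [hfun] at hcomp
      exact hcomp.congr_deriv (by ring)
    have h1 : Integrable (fun x : Fin (m + 1) → ℝ =>
        (fderiv ℝ u x ((Pi.single i 1 : Fin (m + 1) → ℝ))) * OscAux.Gfun g i (ε⁻¹ • x)) volume :=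
      ((hui i).mul hχc).integrable_of_hasCompactSupport ((huisupp i).mul_right)
    have h2 : Integrable (fun x : Fin (m + 1) → ℝ => u x *
        (ε⁻¹ * (OscAux.Fav g (i : ℕ) (ε⁻¹ • x) - OscAux.Fav g ((i : ℕ) + 1) (ε⁻¹ • x)))) volume :=
      (hucont.mul hφc).integrable_of_hasCompactSupport (hsupp.mul_right)
    have h3 : Integrable (fun x : Fin (m + 1) → ℝ => u x * OscAux.Gfun g i (ε⁻¹ • x)) volume :=
      (hucont.mul hχc).integrable_of_hasCompactSupport (hsupp.mul_right)
    exact integral_bilinear_hasLineDerivAt_right_eq_neg_left_of_integrable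
      (μ := volume) (B := ContinuousLinearMap.mul ℝ ℝ) h1 h2 h3 (fun x _ => hlu x) (fun x _ => hlχ x)
  -- integrability of the summands
  have hsummand : ∀ i : Fin (m + 1), Integrable (fun x : Fin (m + 1) → ℝ =>
      u x * (OscAux.Fav g (i : ℕ) (ε⁻¹ • x) - OscAux.Fav g ((i : ℕ) + 1) (ε⁻¹ • x))) volume :=
    fun i => (hucont.mul
      (((OscAux.Fav_continuous hgc hMg _).comp hsm).sub
        ((OscAux.Fav_continuous hgc hMg _).comp hsm))).integrable_of_hasCompactSupport
      (hsupp.mul_right)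
  have heq1 : ∫ x : Fin (m + 1) → ℝ, u x * g (ε⁻¹ • x)
      = ∑ i : Fin (m + 1), ∫ x : Fin (m + 1) → ℝ,
          u x * (OscAux.Fav g (i : ℕ) (ε⁻¹ • x) - OscAux.Fav g ((i : ℕ) + 1) (ε⁻¹ • x)) := by
    have hfe : (fun x : Fin (m + 1) → ℝ => u x * g (ε⁻¹ • x))
        = fun x : Fin (m + 1) → ℝ => ∑ i : Fin (m + 1),
            u x * (OscAux.Fav g (i : ℕ) (ε⁻¹ • x) - OscAux.Fav g ((i : ℕ) + 1) (ε⁻¹ • x)) :=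
      funext fun x => by rw [hsum (ε⁻¹ • x), Finset.mul_sum]
    rw [hfe, integral_finset_sum _ (fun i _ => hsummand i)]
  have heq2 : ∀ i : Fin (m + 1), ∫ x : Fin (m + 1) → ℝ,
        u x * (OscAux.Fav g (i : ℕ) (ε⁻¹ • x) - OscAux.Fav g ((i : ℕ) + 1) (ε⁻¹ • x))
      = ε * ∫ x : Fin (m + 1) → ℝ, u x *
          (ε⁻¹ * (OscAux.Fav g (i : ℕ) (ε⁻¹ • x) - OscAux.Fav g ((i : ℕ) + 1) (ε⁻¹ • x))) := by
    intro i
    rw [← integral_const_mul]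
    congr 1
    funext x
    field_simp
  have hterm : ∀ i : Fin (m + 1),
      |∫ x : Fin (m + 1) → ℝ,
          (fderiv ℝ u x ((Pi.single i 1 : Fin (m + 1) → ℝ))) * OscAux.Gfun g i (ε⁻¹ • x)|
        ≤ 2 * Mg * I := by
    intro i
    have hχc : Continuous fun x : Fin (m + 1) → ℝ => OscAux.Gfun g i (ε⁻¹ • x) :=
      (OscAux.Gfun_continuous hgc hMg i).comp hsm
    have h1 : Integrable (fun x : Fin (m + 1) → ℝ =>
        (fderiv ℝ u x ((Pi.single i 1 : Fin (m + 1) → ℝ))) * OscAux.Gfun g i (ε⁻¹ • x)) volume :=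
      ((hui i).mul hχc).integrable_of_hasCompactSupport ((huisupp i).mul_right)
    have hint2 : Integrable (fun x : Fin (m + 1) → ℝ => ‖fderiv ℝ u x‖ * (2 * Mg)) volume :=
      (hu'cont.norm.mul continuous_const).integrable_of_hasCompactSupport
        (hfsupp.norm.mul_right)
    calc |∫ x : Fin (m + 1) → ℝ,
          (fderiv ℝ u x ((Pi.single i 1 : Fin (m + 1) → ℝ))) * OscAux.Gfun g i (ε⁻¹ • x)|
        ≤ ∫ x : Fin (m + 1) → ℝ,
            |fderiv ℝ u x ((Pi.single i 1 : Fin (m + 1) → ℝ))| *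
              |OscAux.Gfun g i (ε⁻¹ • x)| := by
          simpa [Real.norm_eq_abs, abs_mul] using norm_integral_le_integral_norm
            (μ := (volume : Measure (Fin (m + 1) → ℝ)))
            (fun x : Fin (m + 1) → ℝ =>
              (fderiv ℝ u x ((Pi.single i 1 : Fin (m + 1) → ℝ))) * OscAux.Gfun g i (ε⁻¹ • x))
    _ ≤ ∫ x : Fin (m + 1) → ℝ, ‖fderiv ℝ u x‖ * (2 * Mg) := by
        have hint1 : Integrable (fun x : Fin (m + 1) → ℝ =>
            |fderiv ℝ u x ((Pi.single i 1 : Fin (m + 1) → ℝ))| *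
              |OscAux.Gfun g i (ε⁻¹ • x)|) volume := by
          simpa [abs_mul] using h1.abs
        apply integral_mono hint1 hint2
        intro x
        dsimp only
        have e1 : |fderiv ℝ u x ((Pi.single i 1 : Fin (m + 1) → ℝ))| ≤ ‖fderiv ℝ u x‖ := by
          have h := (fderiv ℝ u x).le_opNorm ((Pi.single i 1 : Fin (m + 1) → ℝ))
          rw [Pi.norm_single] at h
          simpa [Real.norm_eq_abs] using h
        exact mul_le_mul e1 (OscAux.Gfun_bound hgc hMg hper i _) (abs_nonneg _)
          (norm_nonneg _)
    _ = 2 * Mg * I := by rw [integral_mul_const, hI]; ring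
  calc |∫ x : Fin (m + 1) → ℝ, u x * g (ε⁻¹ • x)|
      = |∑ i : Fin (m + 1), ε * (- ∫ x : Fin (m + 1) → ℝ,
          (fderiv ℝ u x ((Pi.single i 1 : Fin (m + 1) → ℝ))) * OscAux.Gfun g i (ε⁻¹ • x))| := by
        rw [heq1]
        congr 1
        refine Finset.sum_congr rfl fun i _ => ?_
        rw [heq2 i, hIBP i]
  _ ≤ ∑ i : Fin (m + 1), |ε * (- ∫ x : Fin (m + 1) → ℝ,
          (fderiv ℝ u x ((Pi.single i 1 : Fin (m + 1) → ℝ))) * OscAux.Gfun g i (ε⁻¹ • x))| :=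
        Finset.abs_sum_le_sum_abs _ _
  _ ≤ ∑ _i : Fin (m + 1), ε * (2 * Mg * I) := by
        refine Finset.sum_le_sum fun i _ => ?_
        rw [abs_mul, abs_neg, abs_of_pos hε]
        exact mul_le_mul_of_nonneg_left (hterm i) (le_of_lt hε)
  _ = (m + 1) * (2 * Mg) * ε * I := by
        rw [Finset.sum_const, Finset.card_univ, Fintype.card_fin]
        push_cast
        ring
end
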